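/- If a reduced convex body R ⊂ S^d has thickness Δ(R) ≥ π/2, then R is a body of constant width Δ(R), i.e., width_K(R) = Δ(R) for every hemisphere K supporting R. -/

import Mathlib

open Set Metric
open scoped RealInnerProductSpace

noncomputable section

/-- Euclidean space `E^{d+1}`. -/
abbrev E (d : ℕ) := EuclideanSpace ℝ (Fin (d + 1))

/-- The unit sphere `S^d ⊆ E^{d+1}`. -/
def Sph (d : ℕ) : Set (E d) := Metric.sphere (0 : E d) 1

variable {d : ℕ}

/-- Geodesic (angular) distance on the unit sphere. -/
def sdist (x y : E d) : ℝ := Real.arccos ⟪x, y⟫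

/-- Closed hemisphere with center `p`. -/
def Hemi (p : E d) : Set (E d) := {x ∈ Sph d | 0 ≤ ⟪p, x⟫}

/-- Open hemisphere with center `p`. -/
def openHemi (p : E d) : Set (E d) := {x ∈ Sph d | 0 < ⟪p, x⟫}

/-- Boundary great subsphere of the hemisphere with center `p`. -/
def bdHemi (p : E d) : Set (E d) := {x ∈ Sph d | ⟪p, x⟫ = 0}

/-- Spherical convexity: no antipodal pairs, and the nonnegative cone over the
set is convex (equivalent to being closed under shorter arcs). -/
def SphConvex (C : Set (E d)) : Prop :=
  (∀ x ∈ C, -x ∉ C) ∧ Convex ℝ {v : E d | ∃ r : ℝ, 0 ≤ r ∧ ∃ x ∈ C, v = r • x}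

/-- Spherical convex hull: the smallest spherically convex subset of the
sphere containing `A`. -/
def sConvHull (A : Set (E d)) : Set (E d) := ⋂₀ {C | SphConvex C ∧ C ⊆ Sph d ∧ A ⊆ C}

/-- Interior of `C` relative to the sphere. -/
def sInterior (C : Set (E d)) : Set (E d) :=
  {x ∈ Sph d | ∃ ε > 0, Metric.ball x ε ∩ Sph d ⊆ C}

/-- A spherical convex body: closed, spherically convex, with nonempty
interior relative to the sphere. -/
def IsBody (C : Set (E d)) : Prop :=
  C ⊆ Sph d ∧ IsClosed C ∧ SphConvex C ∧ (sInterior C).Nonempty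

/-- Spherical ball of radius `r` centered at `p`. -/
def sBall (p : E d) (r : ℝ) : Set (E d) := {x ∈ Sph d | sdist p x ≤ r}

/-- Normalization of a vector. -/
def nrm (v : E d) : E d := ‖v‖⁻¹ • v

/-- The center of the `(d-1)`-dimensional hemisphere `bd(G) ∩ H`, where `G`, `H`
are the hemispheres centered at `g`, `h`. -/
def cGH (g h : E d) : E d := nrm (h - ⟪g, h⟫ • g)

/-- Thickness of the lune `Hemi g ∩ Hemi h`: the geodesic distance between the
centers of its two bounding `(d-1)`-dimensional hemispheres. -/
def lthick (g h : E d) : ℝ := Real.pi - sdist g h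

/-- The hemisphere centered at `k` supports `C`. -/
def Supports (k : E d) (C : Set (E d)) : Prop :=
  C ⊆ Hemi k ∧ (bdHemi k ∩ C).Nonempty

/-- Width of `C` determined by a supporting hemisphere centered at `k`:
minimal thickness of a lune `K ∩ K*` over supporting hemispheres `K* ≠ K`. -/
def width (C : Set (E d)) (k : E d) : ℝ :=
  sInf {w | ∃ k' ∈ Sph d, k' ≠ k ∧ k' ≠ -k ∧ Supports k' C ∧ w = lthick k k'}

/-- Thickness of `C`: minimal thickness of a lune containing `C`. -/
def thick (C : Set (E d)) : ℝ :=
  sInf {w | ∃ g ∈ Sph d, ∃ h ∈ Sph d, g ≠ h ∧ g ≠ -h ∧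
    C ⊆ Hemi g ∩ Hemi h ∧ w = lthick g h}

/-- Spherical diameter of a set. -/
def sdiam (C : Set (E d)) : ℝ := sSup {r | ∃ x ∈ C, ∃ y ∈ C, r = sdist x y}

/-- Reduced spherical convex body. -/
def Reduced (R : Set (E d)) : Prop :=
  IsBody R ∧ ∀ Z : Set (E d), IsBody Z → Z ⊆ R → Z ≠ R → thick Z < thick R

/-- Extreme point of a spherical convex body. -/
def ExtremePt (C : Set (E d)) (e : E d) : Prop := e ∈ C ∧ SphConvex (C \ {e})

/-!
Write `θ = π - Δ(R) ≤ π / 2`. Two hemispheres `Hemi u`, `Hemi v` containing `R` have centers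
at angle at most `θ`, since otherwise the lune `Hemi u ∩ Hemi v` would be thinner than `Δ(R)`.
Given a supporting hemisphere `Hemi k`, it suffices to find a supporting `Hemi k'` with
`∠(k, k') ≥ θ`: then `width_K(R) ≤ π - ∠(k, k') ≤ Δ(R) ≤ width_K(R)`.

Among the hemispheres containing `R`, the one whose center `s` is farthest from `k` supports `R`.
If `∠(k, s) < θ`, tilt `Hemi k` slightly to a hemisphere `Hemi n` that cuts off a boundary point
of `R` but keeps an interior one. By Farkas' lemma the centers of hemispheres containing
`R ∩ Hemi n` are (limits of) conic combinations of `n` and of centers of hemispheres containing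
`R`; all of these lie within angle `θ` of each other, and since `θ ≤ π / 2` conic combinations
keep that bound. Hence `Δ(R ∩ Hemi n) ≥ Δ(R)`, contradicting the reducedness of `R`.
-/

open InnerProductGeometry
open scoped Pointwise

section InnerProductSpace

variable {F : Type*} [NormedAddCommGroup F] [InnerProductSpace ℝ F]

def PairwiseCosGE (c : ℝ) (S : Set F) : Prop :=
  ∀ x ∈ S, ∀ y ∈ S, c * (‖x‖ * ‖y‖) ≤ ⟪x, y⟫

namespace PairwiseCosGE

variable {c : ℝ} {S T : Set F}

lemma mono (h : PairwiseCosGE c S) (hTS : T ⊆ S) : PairwiseCosGE c T :=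
  fun x hx y hy => h x (hTS hx) y (hTS hy)

lemma add (hc : 0 ≤ c) (h : PairwiseCosGE c S) : PairwiseCosGE c (S + S) := by
  rintro _ ⟨x, hx, x', hx', rfl⟩ _ ⟨y, hy, y', hy', rfl⟩
  have hnorm : ‖x + x'‖ * ‖y + y'‖ ≤ (‖x‖ + ‖x'‖) * (‖y‖ + ‖y'‖) :=
    mul_le_mul (norm_add_le x x') (norm_add_le y y') (norm_nonneg _) (by positivity)
  simp only [inner_add_left, inner_add_right]
  nlinarith [h x hx y hy, h x hx y' hy', h x' hx' y hy, h x' hx' y' hy',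
    mul_le_mul_of_nonneg_left hnorm hc]

lemma closure (h : PairwiseCosGE c S) : PairwiseCosGE c (_root_.closure S) := by
  set P := {q : F × F | c * (‖q.1‖ * ‖q.2‖) ≤ ⟪q.1, q.2⟫}
  have hsub : _root_.closure S ×ˢ _root_.closure S ⊆ P := by
    rw [← closure_prod_eq]
    exact closure_minimal (fun q hq => h q.1 hq.1 q.2 hq.2)
      (isClosed_le (by fun_prop) (by fun_prop))
  exact fun x hx y hy => hsub (mk_mem_prod hx hy)

lemma of_angle_le {θ : ℝ} {U : Set F} (hθ : θ ≤ Real.pi)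
    (hU : ∀ u ∈ U, ∀ v ∈ U, angle u v ≤ θ)
    (hS : ∀ x ∈ S, x ≠ 0 → ∃ r : ℝ, 0 < r ∧ ∃ u ∈ U, x = r • u) :
    PairwiseCosGE (Real.cos θ) S := by
  intro x hx y hy
  rcases eq_or_ne x 0 with rfl | hx0
  · simp
  rcases eq_or_ne y 0 with rfl | hy0
  · simp
  obtain ⟨r, hr, u, hu, rfl⟩ := hS x hx hx0
  obtain ⟨s, hs, v, hv, rfl⟩ := hS y hy hy0
  rw [← cos_angle_mul_norm_mul_norm, angle_smul_left_of_pos _ _ hr,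
    angle_smul_right_of_pos _ _ hs]
  exact mul_le_mul_of_nonneg_right
    (Real.cos_le_cos_of_nonneg_of_le_pi (angle_nonneg u v) hθ (hU u hu v hv)) (by positivity)

end PairwiseCosGE

lemma angle_le_of_cos_mul_le_inner {x y : F} {θ : ℝ} (hx : x ≠ 0) (hy : y ≠ 0) (hθ : 0 ≤ θ)
    (h : Real.cos θ * (‖x‖ * ‖y‖) ≤ ⟪x, y⟫) : angle x y ≤ θ := by
  rw [← cos_angle_mul_norm_mul_norm] at h
  have hcos := le_of_mul_le_mul_right h (by positivity)
  by_contra! hlt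
  exact hcos.not_gt (Real.cos_lt_cos_of_nonneg_of_le_pi hθ (angle_le_pi x y) hlt)

lemma angle_lt_pi_div_two_iff {x y : F} : angle x y < Real.pi / 2 ↔ 0 < ⟪x, y⟫ := by
  rw [angle, Real.arccos_lt_pi_div_two]
  constructor
  · intro h
    by_contra! hle
    exact h.not_ge (div_nonpos_of_nonpos_of_nonneg hle (by positivity))
  · intro h
    have hx : x ≠ 0 := by rintro rfl; simp at h
    have hy : y ≠ 0 := by rintro rfl; simp at h
    positivity

lemma norm_cos_smul_sub_sin_smul {a b : F} (ha : ‖a‖ = 1) (hb : ‖b‖ = 1) (hab : ⟪a, b⟫ = 0)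
    (t : ℝ) : ‖Real.cos t • a - Real.sin t • b‖ = 1 := by
  have hsq : ‖Real.cos t • a - Real.sin t • b‖ ^ 2 = 1 := by
    rw [norm_sub_sq_real, norm_smul, norm_smul, real_inner_smul_left, real_inner_smul_right, hab,
      ha, hb, Real.norm_eq_abs, Real.norm_eq_abs]
    nlinarith [Real.sin_sq_add_cos_sq t, sq_abs (Real.sin t), sq_abs (Real.cos t)]
  exact (pow_eq_one_iff_of_nonneg (norm_nonneg _) two_ne_zero).mp hsq

-- That is, `∠(k, s - t • k) > ∠(k, s)`.
lemma inner_sub_smul_lt_mul_norm {k s : F} (hk : ‖k‖ = 1) (hs : ‖s‖ = 1)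
    (h₁ : -1 < ⟪k, s⟫) (h₂ : ⟪k, s⟫ < 1) {t : ℝ} (ht : 0 < t) :
    ⟪k, s - t • k⟫ < ⟪k, s⟫ * ‖s - t • k‖ := by
  set μ := ⟪k, s⟫
  have hsq : ‖s - t • k‖ ^ 2 = 1 - 2 * t * μ + t ^ 2 := by
    rw [norm_sub_sq_real, norm_smul, real_inner_smul_right, real_inner_comm, hs, hk,
      Real.norm_eq_abs, abs_of_pos ht]
    ring
  have hle : ‖s - t • k‖ ≤ 1 + t := by
    calc ‖s - t • k‖ ≤ ‖s‖ + ‖t • k‖ := norm_sub_le _ _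
      _ = 1 + t := by rw [hs, norm_smul, hk, Real.norm_eq_abs, abs_of_pos ht, mul_one]
  have hlhs : ⟪k, s - t • k⟫ = μ - t := by
    rw [inner_sub_right, real_inner_smul_right, real_inner_self_eq_norm_sq, hk]; ring
  rw [hlhs]
  set N := ‖s - t • k‖
  have hN : 0 < N := by
    have : (0 : ℝ) ^ 2 < N ^ 2 := by rw [hsq]; nlinarith [sq_nonneg (t - μ)]
    exact lt_of_pow_lt_pow_left₀ 2 (norm_nonneg _) this
  rcases le_or_gt μ 0 with hμ | hμ
  · nlinarith
  rcases le_or_gt (2 * μ) t with hμt | hμt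
  · nlinarith
  refine lt_of_pow_lt_pow_left₀ 2 (by positivity) ?_
  rw [mul_pow, hsq]
  nlinarith [mul_pos (mul_pos ht (by nlinarith : 0 < 1 - μ ^ 2)) (by linarith : 0 < 2 * μ - t)]

lemma exists_angle_eq_inner_neg {k x : F} (hk : ‖k‖ = 1) (hx : ‖x‖ = 1) (hkx : ⟪k, x⟫ = 0)
    {β : ℝ} (hβ₀ : 0 < β) (hβ : β < Real.pi) : ∃ n : F, ‖n‖ = 1 ∧ angle k n = β ∧ ⟪n, x⟫ < 0 := by
  refine ⟨Real.cos β • k - Real.sin β • x, norm_cos_smul_sub_sin_smul hk hx hkx β, ?_, ?_⟩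
  · rw [angle, norm_cos_smul_sub_sin_smul hk hx hkx β, hk, inner_sub_right,
      real_inner_smul_right, real_inner_smul_right, hkx, real_inner_self_eq_norm_sq, hk]
    simpa using Real.arccos_cos hβ₀.le hβ.le
  · rw [inner_sub_left, real_inner_smul_left, real_inner_smul_left, hkx,
      real_inner_self_eq_norm_sq, hx]
    linarith [Real.sin_pos_of_pos_of_lt_pi hβ₀ hβ]

end InnerProductSpace

section Cones

variable {F : Type*} [NormedAddCommGroup F] [InnerProductSpace ℝ F]

def posCone (C : Set F) : Set F := {v | ∃ r : ℝ, 0 ≤ r ∧ ∃ x ∈ C, v = r • x}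

variable {C : Set F}

lemma smul_mem_posCone {c : ℝ} (hc : 0 ≤ c) {v : F} (hv : v ∈ posCone C) :
    c • v ∈ posCone C := by
  obtain ⟨r, hr, x, hx, rfl⟩ := hv
  exact ⟨c * r, mul_nonneg hc hr, x, hx, by rw [smul_smul]⟩

lemma add_mem_posCone (hC : Convex ℝ (posCone C)) {v w : F} (hv : v ∈ posCone C)
    (hw : w ∈ posCone C) : v + w ∈ posCone C := by
  have hmid := hC hv hw (by norm_num : (0 : ℝ) ≤ 1 / 2) (by norm_num : (0 : ℝ) ≤ 1 / 2)
    (by norm_num)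
  have := smul_mem_posCone (by norm_num : (0 : ℝ) ≤ 2) hmid
  rwa [smul_add, smul_smul, smul_smul, (by norm_num : (2 : ℝ) * (1 / 2) = 1), one_smul,
    one_smul] at this

lemma isClosed_posCone (hC : IsCompact C) (h1 : ∀ x ∈ C, ‖x‖ = 1) : IsClosed (posCone C) := by
  refine IsSeqClosed.isClosed fun f a hf hfa => ?_
  choose r hr x hx hfx using hf
  obtain ⟨y, hy, φ, hφ, hxy⟩ := hC.tendsto_subseq hx
  have hnorm : ∀ n, ‖f n‖ = r n := fun n => by
    rw [hfx n, norm_smul, Real.norm_eq_abs, abs_of_nonneg (hr n), h1 _ (hx n), mul_one]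
  have hr_lim : Filter.Tendsto (r ∘ φ) Filter.atTop (nhds ‖a‖) := by
    simpa only [Function.comp_def, hnorm] using
      (continuous_norm.tendsto a).comp (hfa.comp hφ.tendsto_atTop)
  have hf_lim : Filter.Tendsto (f ∘ φ) Filter.atTop (nhds (‖a‖ • y)) := by
    simpa only [Function.comp_def, hfx] using hr_lim.smul hxy
  exact ⟨‖a‖, norm_nonneg a, y, hy, tendsto_nhds_unique (hfa.comp hφ.tendsto_atTop) hf_lim⟩

lemma ProperCone.exists_coe_eq_posCone (hne : C.Nonempty) (hconv : Convex ℝ (posCone C))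
    (hcl : IsClosed (posCone C)) : ∃ K : ProperCone ℝ F, (K : Set F) = posCone C := by
  obtain ⟨x, hx⟩ := hne
  exact ⟨⟨⟨⟨⟨posCone C, fun hv hw => add_mem_posCone hconv hv hw⟩,
      ⟨0, le_rfl, x, hx, (zero_smul ℝ x).symm⟩⟩,
    fun c _ hv => smul_mem_posCone c.2 hv⟩, hcl⟩, rfl⟩

lemma PairwiseCosGE.properCone_sup {c : ℝ} (hc : 0 ≤ c) {A B : ProperCone ℝ F}
    (h : PairwiseCosGE c ((A : Set F) ∪ B)) :
    PairwiseCosGE c ((A ⊔ B : ProperCone ℝ F) : Set F) := by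
  rw [ClosedSubmodule.coe_sup]
  refine ((h.add hc).mono ?_).closure
  intro x hx
  obtain ⟨y, hy, z, hz, rfl⟩ := Submodule.mem_sup.mp hx
  exact Set.add_mem_add (Or.inl hy) (Or.inr hz)

variable [CompleteSpace F]

open ProperCone in
theorem ProperCone.innerDual_inf_le (C D : ProperCone ℝ F) :
    innerDual ((C ⊓ D : ProperCone ℝ F) : Set F) ≤ innerDual C ⊔ innerDual D := by
  intro u hu
  by_contra hu'
  obtain ⟨y, hy, hyu⟩ := hyperplane_separation' _ hu'
  have hyC : y ∈ C := by
    rw [← innerDual_innerDual C]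
    exact fun x hx => hy x (le_sup_left (a := innerDual (C : Set F)) hx)
  have hyD : y ∈ D := by
    rw [← innerDual_innerDual D]
    exact fun x hx => hy x (le_sup_right (a := innerDual (C : Set F)) hx)
  exact hyu.not_ge (real_inner_comm u y ▸ hu ⟨hyC, hyD⟩)

lemma exists_nonneg_smul_of_mem_innerDual_innerDual_singleton {n w : F} (hn : n ≠ 0)
    (hw : w ∈ ProperCone.innerDual (ProperCone.innerDual ({n} : Set F) : Set F)) :
    ∃ c : ℝ, 0 ≤ c ∧ w = c • n := by
  simp only [ProperCone.mem_innerDual, SetLike.mem_coe, Set.mem_singleton_iff,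
    forall_eq] at hw
  set c := ⟪n, w⟫ / ‖n‖ ^ 2
  have hnn : 0 < ‖n‖ ^ 2 := by positivity
  have horth : ⟪n, w - c • n⟫ = 0 := by
    rw [inner_sub_right, real_inner_smul_right, real_inner_self_eq_norm_sq,
      div_mul_cancel₀ _ hnn.ne', sub_self]
  have hsq : ‖w - c • n‖ ^ 2 = ⟪w - c • n, w⟫ := by
    rw [← real_inner_self_eq_norm_sq, inner_sub_right (w - c • n) w, real_inner_smul_right,
      real_inner_comm n, horth, mul_zero, sub_zero]
  have hle : ‖w - c • n‖ ^ 2 ≤ 0 := by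
    have h := hw (x := -(w - c • n)) (by rw [inner_neg_right, horth, neg_zero])
    rw [inner_neg_left] at h
    linarith
  refine ⟨c, div_nonneg (hw (real_inner_self_nonneg (x := n))) hnn.le, ?_⟩
  rw [← sub_eq_zero, ← norm_eq_zero]
  exact pow_eq_zero_iff (n := 2) two_ne_zero |>.mp (le_antisymm hle (sq_nonneg _))

end Cones

lemma mem_Sph_iff {x : E d} : x ∈ Sph d ↔ ‖x‖ = 1 := mem_sphere_zero_iff_norm

lemma sdist_eq_angle {x y : E d} (hx : ‖x‖ = 1) (hy : ‖y‖ = 1) : sdist x y = angle x y := by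
  simp [sdist, angle, hx, hy]

lemma ne_zero_of_mem_Sph {x : E d} (hx : x ∈ Sph d) : x ≠ 0 :=
  norm_ne_zero_iff.1 (by rw [mem_Sph_iff.1 hx]; exact one_ne_zero)

lemma lthick_eq {g h : E d} (hg : ‖g‖ = 1) (hh : ‖h‖ = 1) :
    lthick g h = Real.pi - angle g h := by
  rw [lthick, sdist_eq_angle hg hh]

lemma lthick_nonneg (g h : E d) : 0 ≤ lthick g h := sub_nonneg.2 (Real.arccos_le_pi _)

lemma nrm_mem_Sph {v : E d} (hv : v ≠ 0) : nrm v ∈ Sph d := by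
  rw [mem_Sph_iff, nrm, norm_smul, norm_inv, norm_norm, inv_mul_cancel₀ (norm_ne_zero_iff.2 hv)]

lemma norm_smul_nrm {v : E d} (hv : v ≠ 0) : ‖v‖ • nrm v = v := by
  rw [nrm, smul_smul, mul_inv_cancel₀ (norm_ne_zero_iff.2 hv), one_smul]

lemma isClosed_Hemi (p : E d) : IsClosed (Hemi p) :=
  isClosed_sphere.inter (isClosed_le (g := fun x => ⟪p, x⟫) continuous_const (by fun_prop))

lemma IsBody.isCompact {C : Set (E d)} (hC : IsBody C) : IsCompact C :=
  (isCompact_sphere (0 : E d) 1).of_isClosed_subset hC.2.1 hC.1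

def sPolar (C : Set (E d)) : Set (E d) := {u ∈ Sph d | C ⊆ Hemi u}

lemma isCompact_sPolar {C : Set (E d)} (hC : C ⊆ Sph d) : IsCompact (sPolar C) := by
  have heq : sPolar C = Sph d ∩ ⋂ z ∈ C, {u | 0 ≤ ⟪u, z⟫} := by
    ext u
    simp only [sPolar, Hemi, subset_def, mem_ofPred_eq, mem_inter_iff, mem_iInter]
    exact and_congr_right fun _ => forall₂_congr fun z hz => by
      rw [real_inner_comm]; exact and_iff_right (hC hz)
  rw [heq]
  exact (isCompact_sphere (0 : E d) 1).inter_right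
    (isClosed_biInter fun z _ => isClosed_le continuous_const (by fun_prop))

lemma inner_pos_of_mem_sInterior {C : Set (E d)} {u p : E d} (hu : ‖u‖ = 1) (hC : C ⊆ Hemi u)
    (hp : p ∈ sInterior C) : 0 < ⟪u, p⟫ := by
  obtain ⟨hpS, ε, hε, hball⟩ := hp
  refine (hC (hball ⟨mem_ball_self hε, hpS⟩)).2.lt_of_ne fun hup => ?_
  have hpu : ⟪p, u⟫ = 0 := by rw [real_inner_comm]; exact hup.symm
  -- rotating `p` away from `u` leaves `Hemi u` while staying close to `p`
  set q : ℝ → E d := fun t => Real.cos t • p - Real.sin t • u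
  have hq : Filter.Tendsto q (nhdsWithin 0 (Ioi 0)) (nhds p) := by
    have hcont : Continuous q := by fun_prop
    simpa [q] using (hcont.tendsto 0).mono_left nhdsWithin_le_nhds
  obtain ⟨t, htε, ht⟩ :=
    ((hq.eventually (ball_mem_nhds p hε)).and (Ioo_mem_nhdsGT Real.pi_pos)).exists
  have hqS : q t ∈ Sph d :=
    mem_Sph_iff.2 (norm_cos_smul_sub_sin_smul (mem_Sph_iff.1 hpS) hu hpu t)
  have hqu := (hC (hball ⟨htε, hqS⟩)).2
  rw [inner_sub_right, real_inner_smul_right, real_inner_smul_right, ← hup,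
    real_inner_self_eq_norm_sq, hu] at hqu
  linarith [Real.sin_pos_of_pos_of_lt_pi ht.1 ht.2]

lemma ne_neg_of_mem_sPolar {C : Set (E d)} {p u v : E d} (hp : p ∈ sInterior C)
    (hu : u ∈ sPolar C) (hv : v ∈ sPolar C) : u ≠ -v := by
  rintro rfl
  have h₁ := inner_pos_of_mem_sInterior (mem_Sph_iff.1 hu.1) hu.2 hp
  have h₂ := inner_pos_of_mem_sInterior (mem_Sph_iff.1 hv.1) hv.2 hp
  rw [inner_neg_left] at h₁
  linarith

section Thickness

variable {C : Set (E d)}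

lemma thick_le_lthick {g h : E d} (hg : g ∈ Sph d) (hh : h ∈ Sph d) (hgh : g ≠ h)
    (hgh' : g ≠ -h) (hC : C ⊆ Hemi g ∩ Hemi h) : thick C ≤ lthick g h :=
  csInf_le ⟨0, by rintro _ ⟨-, -, -, -, -, -, -, rfl⟩; exact lthick_nonneg _ _⟩
    ⟨g, hg, h, hh, hgh, hgh', hC, rfl⟩

lemma exists_lune_of_thick_pos (hC : 0 < thick C) :
    ∃ g ∈ Sph d, ∃ h ∈ Sph d, g ≠ h ∧ g ≠ -h ∧ C ⊆ Hemi g ∩ Hemi h := by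
  by_contra! hnone
  have hempty : {w | ∃ g ∈ Sph d, ∃ h ∈ Sph d, g ≠ h ∧ g ≠ -h ∧
      C ⊆ Hemi g ∩ Hemi h ∧ w = lthick g h} = ∅ :=
    eq_empty_of_forall_notMem fun _ ⟨g, hg, h, hh, hgh, hgh', hC, _⟩ =>
      hnone g hg h hh hgh hgh' hC
  rw [thick, hempty, Real.sInf_empty] at hC
  exact hC.false

lemma thick_le_pi (C : Set (E d)) : thick C ≤ Real.pi := by
  rcases le_or_gt (thick C) 0 with h | h
  · linarith [Real.pi_pos]
  obtain ⟨g, hg, h, hh, hgh, hgh', hC⟩ := exists_lune_of_thick_pos h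
  exact (thick_le_lthick hg hh hgh hgh' hC).trans (sub_le_self _ (Real.arccos_nonneg _))

lemma thick_lt_pi (hC : 0 < thick C) : thick C < Real.pi := by
  obtain ⟨g, hg, h, hh, hgh, hgh', hgC⟩ := exists_lune_of_thick_pos hC
  have hg1 := mem_Sph_iff.1 hg
  have hh1 := mem_Sph_iff.1 hh
  refine (thick_le_lthick hg hh hgh hgh' hgC).trans_lt ?_
  rw [lthick, sdist, sub_lt_self_iff, Real.arccos_pos]
  exact lt_of_le_of_ne ((real_inner_le_norm g h).trans_eq (by rw [hg1, hh1, one_mul]))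
    fun h1 => hgh ((inner_eq_one_iff_of_norm_eq_one hg1 hh1).1 h1)

lemma le_thick_of_forall_angle_le {θ : ℝ}
    (hne : ∃ g ∈ Sph d, ∃ h ∈ Sph d, g ≠ h ∧ g ≠ -h ∧ C ⊆ Hemi g ∩ Hemi h)
    (hθ : ∀ u ∈ sPolar C, ∀ v ∈ sPolar C, angle u v ≤ θ) : Real.pi - θ ≤ thick C := by
  obtain ⟨g, hg, h, hh, hgh, hgh', hC⟩ := hne
  refine le_csInf ⟨_, g, hg, h, hh, hgh, hgh', hC, rfl⟩ ?_
  rintro _ ⟨u, hu, v, hv, -, -, huv, rfl⟩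
  rw [lthick_eq (mem_Sph_iff.1 hu) (mem_Sph_iff.1 hv)]
  linarith [hθ u ⟨hu, huv.trans inter_subset_left⟩ v ⟨hv, huv.trans inter_subset_right⟩]

lemma angle_le_of_mem_sPolar (hC : (sInterior C).Nonempty) {u v : E d} (hu : u ∈ sPolar C)
    (hv : v ∈ sPolar C) : angle u v ≤ Real.pi - thick C := by
  obtain ⟨p, hp⟩ := hC
  rcases eq_or_ne u v with rfl | huv
  · rw [angle_self (ne_zero_of_mem_Sph hu.1)]
    linarith [thick_le_pi C]
  have := thick_le_lthick hu.1 hv.1 huv (ne_neg_of_mem_sPolar hp hu hv) (subset_inter hu.2 hv.2)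
  rw [lthick_eq (mem_Sph_iff.1 hu.1) (mem_Sph_iff.1 hv.1)] at this
  linarith

end Thickness

lemma supports_of_isMinOn {R : Set (E d)} (hRc : IsCompact R) {k s : E d} (hk : ‖k‖ = 1)
    (hs : s ∈ sPolar R) (hmin : IsMinOn (fun u => ⟪k, u⟫) (sPolar R) s)
    (h₁ : -1 < ⟪k, s⟫) (h₂ : ⟪k, s⟫ < 1) : Supports s R := by
  refine ⟨hs.2, ?_⟩
  by_contra hnot
  have hpos : ∀ z ∈ R, 0 < ⟪s, z⟫ := fun z hz =>
    (hs.2 hz).2.lt_of_ne fun h => hnot ⟨z, ⟨(hs.2 hz).1, h.symm⟩, hz⟩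
  obtain ⟨δ, hδ, hδR⟩ : ∃ δ > 0, ∀ z ∈ R, δ ≤ ⟪s, z⟫ := by
    rcases R.eq_empty_or_nonempty with rfl | hne
    · exact ⟨1, one_pos, by simp⟩
    obtain ⟨z₀, hz₀, hz₀min⟩ :=
      hRc.exists_isMinOn hne (by fun_prop : Continuous fun z : E d => ⟪s, z⟫).continuousOn
    exact ⟨_, hpos z₀ hz₀, fun z hz => hz₀min hz⟩
  -- tilting `s` away from `k` keeps `R` in the hemisphere but decreases `⟪k, ·⟫`
  have hlt := inner_sub_smul_lt_mul_norm hk (mem_Sph_iff.1 hs.1) h₁ h₂ hδ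
  set w := s - δ • k
  have hw : w ≠ 0 := by
    intro hw
    rw [hw, inner_zero_right, norm_zero, mul_zero] at hlt
    exact hlt.false
  have hwR : nrm w ∈ sPolar R := by
    refine ⟨nrm_mem_Sph hw, fun z hz => ⟨(hs.2 hz).1, ?_⟩⟩
    have hkz : ⟪k, z⟫ ≤ 1 :=
      (real_inner_le_norm k z).trans_eq (by rw [hk, mem_Sph_iff.1 (hs.2 hz).1, one_mul])
    rw [nrm, real_inner_smul_left, inner_sub_left, real_inner_smul_left]
    exact mul_nonneg (by positivity) (by nlinarith [hδR z hz])
  have hle : ⟪k, s⟫ ≤ ⟪k, nrm w⟫ := hmin hwR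
  rw [nrm, real_inner_smul_right] at hle
  rw [le_inv_mul_iff₀ (norm_pos_iff.2 hw)] at hle
  linarith

lemma exists_supports_forall_angle_le {R : Set (E d)} (hR : IsBody R) {k : E d}
    (hk : k ∈ Sph d) (hkR : Supports k R) :
    ∃ s ∈ Sph d, Supports s R ∧ ∀ u ∈ sPolar R, angle k u ≤ angle k s := by
  obtain ⟨p, hp⟩ := hR.2.2.2
  have hkP : k ∈ sPolar R := ⟨hk, hkR.1⟩
  obtain ⟨s, hs, hmin⟩ := (isCompact_sPolar hR.1).exists_isMinOn ⟨k, hkP⟩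
    (by fun_prop : Continuous fun u : E d => ⟪k, u⟫).continuousOn
  have hk1 := mem_Sph_iff.1 hk
  have hs1 := mem_Sph_iff.1 hs.1
  refine ⟨s, hs.1, ?_, fun u hu => ?_⟩
  · rcases eq_or_ne s k with rfl | hsk
    · exact hkR
    refine supports_of_isMinOn hR.isCompact hk1 hs hmin ?_ ?_
    · refine lt_of_le_of_ne ?_ fun h => ne_neg_of_mem_sPolar hp hkP hs
        ((inner_eq_neg_one_iff_of_norm_eq_one hk1 hs1).1 h.symm)
      simpa [hk1, hs1] using neg_le_of_abs_le (abs_real_inner_le_norm k s)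
    · refine lt_of_le_of_ne ((real_inner_le_norm k s).trans_eq (by rw [hk1, hs1, one_mul]))
        fun h => hsk ((inner_eq_one_iff_of_norm_eq_one hk1 hs1).1 h).symm
  · rw [← sdist_eq_angle hk1 (mem_Sph_iff.1 hu.1), ← sdist_eq_angle hk1 hs1]
    exact Real.arccos_le_arccos (hmin hu)

lemma posCone_inter_Hemi {C : Set (E d)} (hC : C ⊆ Sph d) {n : E d}
    (hne : (C ∩ Hemi n).Nonempty) :
    posCone (C ∩ Hemi n) = posCone C ∩ {v | 0 ≤ ⟪n, v⟫} := by
  ext v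
  constructor
  · rintro ⟨r, hr, z, hz, rfl⟩
    refine ⟨⟨r, hr, z, hz.1, rfl⟩, ?_⟩
    rw [mem_ofPred_eq, real_inner_smul_right]
    exact mul_nonneg hr hz.2.2
  · rintro ⟨⟨r, hr, z, hz, rfl⟩, hnv⟩
    rcases hr.eq_or_lt with rfl | hr
    · obtain ⟨z', hz'⟩ := hne
      exact ⟨0, le_rfl, z', hz', by rw [zero_smul, zero_smul]⟩
    rw [mem_ofPred_eq, real_inner_smul_right] at hnv
    exact ⟨r, hr.le, z, ⟨hz, hC hz, nonneg_of_mul_nonneg_right hnv hr⟩, rfl⟩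

lemma IsBody.inter_Hemi {R : Set (E d)} (hR : IsBody R) {n p : E d} (hn : ‖n‖ = 1)
    (hp : p ∈ sInterior R) (hnp : 0 < ⟪n, p⟫) : IsBody (R ∩ Hemi n) := by
  obtain ⟨hRs, hRc, ⟨hanti, hconv⟩, -⟩ := hR
  obtain ⟨hpS, ε, hε, hball⟩ := hp
  have hpZ : p ∈ R ∩ Hemi n := ⟨hball ⟨mem_ball_self hε, hpS⟩, hpS, hnp.le⟩
  refine ⟨inter_subset_left.trans hRs, hRc.inter (isClosed_Hemi n),
    ⟨fun x hx hx' => hanti x hx.1 hx'.1, ?_⟩, p, hpS, min ε ⟪n, p⟫, lt_min hε hnp, ?_⟩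
  · change Convex ℝ (posCone _)
    rw [posCone_inter_Hemi hRs ⟨p, hpZ⟩]
    exact hconv.inter (convex_halfSpace_ge (innerₛₗ ℝ n).isLinear 0)
  · rintro q ⟨hq, hqS⟩
    refine ⟨hball ⟨ball_subset_ball (min_le_left _ _) hq, hqS⟩, hqS, ?_⟩
    have hqp : ‖q - p‖ < ⟪n, p⟫ := (mem_ball_iff_norm.1 hq).trans_le (min_le_right _ _)
    have hnq : |⟪n, q - p⟫| ≤ ‖q - p‖ := by
      simpa [hn] using abs_real_inner_le_norm n (q - p)
    rw [inner_sub_right] at hnq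
    linarith [neg_abs_le (⟪n, q⟫ - ⟪n, p⟫)]

lemma pairwiseCosGE_innerDual_sup {R : Set (E d)} (hRs : R ⊆ Sph d) {K : ProperCone ℝ (E d)}
    (hK : (K : Set (E d)) = posCone R) {n : E d} (hn : ‖n‖ = 1) {θ : ℝ} (hθ₀ : 0 ≤ θ)
    (hθ : θ ≤ Real.pi / 2) (hPP : ∀ u ∈ sPolar R, ∀ v ∈ sPolar R, angle u v ≤ θ)
    (hPn : ∀ u ∈ sPolar R, angle u n ≤ θ) :
    PairwiseCosGE (Real.cos θ) ((ProperCone.innerDual (K : Set (E d)) ⊔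
      ProperCone.innerDual (ProperCone.innerDual ({n} : Set (E d)) : Set (E d)) :
        ProperCone ℝ (E d)) : Set (E d)) := by
  have hn0 := ne_zero_of_mem_Sph (mem_Sph_iff.2 hn)
  refine PairwiseCosGE.properCone_sup (Real.cos_nonneg_of_mem_Icc ⟨by linarith, hθ⟩)
    (PairwiseCosGE.of_angle_le (U := insert n (sPolar R)) (by linarith [Real.pi_pos]) ?_ ?_)
  · rintro u (rfl | hu) v (rfl | hv)
    · rw [angle_self hn0]; exact hθ₀
    · rw [angle_comm]; exact hPn v hv
    · exact hPn u hu
    · exact hPP u hu v hv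
  · rintro x (hx | hx) hx0
    · refine ⟨‖x‖, norm_pos_iff.2 hx0, nrm x,
        Or.inr ⟨nrm_mem_Sph hx0, fun z hz => ⟨hRs hz, ?_⟩⟩, (norm_smul_nrm hx0).symm⟩
      have hzx : 0 ≤ ⟪z, x⟫ :=
        hx (by rw [hK]; exact ⟨1, zero_le_one, z, hz, (one_smul ℝ z).symm⟩)
      rw [nrm, real_inner_smul_left, real_inner_comm]
      positivity
    · obtain ⟨c, hc, rfl⟩ := exists_nonneg_smul_of_mem_innerDual_innerDual_singleton hn0 hx
      exact ⟨c, hc.lt_of_ne (by rintro rfl; simp at hx0), n, Or.inl rfl, rfl⟩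

lemma angle_le_of_mem_sPolar_inter_Hemi {R : Set (E d)} (hR : IsBody R) {n : E d}
    (hn : ‖n‖ = 1) {θ : ℝ} (hθ₀ : 0 ≤ θ) (hθ : θ ≤ Real.pi / 2)
    (hPP : ∀ u ∈ sPolar R, ∀ v ∈ sPolar R, angle u v ≤ θ)
    (hPn : ∀ u ∈ sPolar R, angle u n ≤ θ) {u v : E d} (hu : u ∈ sPolar (R ∩ Hemi n))
    (hv : v ∈ sPolar (R ∩ Hemi n)) : angle u v ≤ θ := by
  have hRs := hR.1
  obtain ⟨p, hpS, ε, hε, hball⟩ := hR.2.2.2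
  obtain ⟨K, hK⟩ := ProperCone.exists_coe_eq_posCone ⟨p, hball ⟨mem_ball_self hε, hpS⟩⟩
    hR.2.2.1.2 (isClosed_posCone hR.isCompact fun x hx => mem_Sph_iff.1 (hRs hx))
  have hmem : ∀ w ∈ sPolar (R ∩ Hemi n), w ∈ ProperCone.innerDual (K : Set (E d)) ⊔
      ProperCone.innerDual (ProperCone.innerDual ({n} : Set (E d)) : Set (E d)) := by
    intro w hw
    refine ProperCone.innerDual_inf_le _ _ fun x ⟨hxK, hxn⟩ => ?_
    obtain ⟨r, hr, z, hz, rfl⟩ : x ∈ posCone R := hK ▸ hxK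
    show 0 ≤ ⟪r • z, w⟫
    have hnz : 0 ≤ r * ⟪n, z⟫ := by
      simpa [real_inner_smul_right] using hxn (Set.mem_singleton n)
    rcases hr.eq_or_lt with rfl | hr
    · simp
    rw [real_inner_smul_left, real_inner_comm]
    exact mul_nonneg hr.le (hw.2 ⟨hz, hRs hz, nonneg_of_mul_nonneg_right hnz hr⟩).2
  exact angle_le_of_cos_mul_le_inner (ne_zero_of_mem_Sph hu.1) (ne_zero_of_mem_Sph hv.1) hθ₀
    (pairwiseCosGE_innerDual_sup hRs hK hn hθ₀ hθ hPP hPn u (hmem u hu) v (hmem v hv))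

lemma thick_le_thick_inter_Hemi {R : Set (E d)} (hR : IsBody R) (hth : Real.pi / 2 ≤ thick R)
    {n : E d} (hn : ‖n‖ = 1) (hPn : ∀ u ∈ sPolar R, angle u n ≤ Real.pi - thick R) :
    thick R ≤ thick (R ∩ Hemi n) := by
  obtain ⟨g, hg, h, hh, hgh, hgh', hRgh⟩ :=
    exists_lune_of_thick_pos (by linarith [Real.pi_pos] : 0 < thick R)
  have := le_thick_of_forall_angle_le ⟨g, hg, h, hh, hgh, hgh', inter_subset_left.trans hRgh⟩
    fun u hu v hv => angle_le_of_mem_sPolar_inter_Hemi hR hn (by linarith [thick_le_pi R])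
      (by linarith) (fun u hu v hv => angle_le_of_mem_sPolar hR.2.2.2 hu hv) hPn hu hv
  linarith

lemma width_eq_thick_of_supports {R : Set (E d)} (hR : (sInterior R).Nonempty) {k k' : E d}
    (hk : k ∈ Sph d) (hkR : Supports k R) (hk' : k' ∈ Sph d) (hk'R : Supports k' R)
    (hpos : 0 < thick R) (hangle : Real.pi - thick R ≤ angle k k') : width R k = thick R := by
  obtain ⟨p, hp⟩ := hR
  have hk1 := mem_Sph_iff.1 hk
  have hne : k' ≠ k := by
    rintro rfl
    rw [angle_self (ne_zero_of_mem_Sph hk)] at hangle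
    linarith [thick_lt_pi hpos]
  have hmem : lthick k k' ∈ {w | ∃ k'' ∈ Sph d, k'' ≠ k ∧ k'' ≠ -k ∧ Supports k'' R ∧
      w = lthick k k''} :=
    ⟨k', hk', hne, ne_neg_of_mem_sPolar hp ⟨hk', hk'R.1⟩ ⟨hk, hkR.1⟩, hk'R, rfl⟩
  refine le_antisymm ?_ (le_csInf ⟨_, hmem⟩ ?_)
  · refine (csInf_le ⟨0, ?_⟩ hmem).trans ?_
    · rintro _ ⟨-, -, -, -, -, rfl⟩
      exact lthick_nonneg _ _
    · rw [lthick_eq hk1 (mem_Sph_iff.1 hk')]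
      linarith
  · rintro _ ⟨k'', hk'', hne₁, hne₂, hk''R, rfl⟩
    exact thick_le_lthick hk hk'' hne₁.symm (fun h => hne₂ (by rw [h, neg_neg]))
      (subset_inter hkR.1 hk''R.1)

lemma exists_supports_pi_sub_thick_le_angle {R : Set (E d)} (hR : Reduced R)
    (hth : Real.pi / 2 ≤ thick R) {k : E d} (hk : k ∈ Sph d) (hkR : Supports k R) :
    ∃ k' ∈ Sph d, Supports k' R ∧ Real.pi - thick R ≤ angle k k' := by
  obtain ⟨hRbody, hRmin⟩ := hR
  obtain ⟨s, hs, hsR, hsmax⟩ := exists_supports_forall_angle_le hRbody hk hkR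
  by_contra! hfar
  have hks := hfar s hs hsR
  obtain ⟨p, hp⟩ := hRbody.2.2.2
  obtain ⟨x, ⟨hxS, hkx⟩, hxR⟩ := hkR.2
  have hk1 := mem_Sph_iff.1 hk
  have hkp : angle k p < Real.pi / 2 :=
    angle_lt_pi_div_two_iff.2 (inner_pos_of_mem_sInterior hk1 hkR.1 hp)
  obtain ⟨β, hβ, hβs, hβp⟩ : ∃ β > 0, β + angle k s ≤ Real.pi - thick R ∧
      β + angle k p < Real.pi / 2 := by
    have hmin := lt_min (sub_pos.2 hks) (sub_pos.2 hkp)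
    refine ⟨_, half_pos hmin, ?_, ?_⟩
    · linarith [min_le_left (Real.pi - thick R - angle k s) (Real.pi / 2 - angle k p)]
    · linarith [min_le_right (Real.pi - thick R - angle k s) (Real.pi / 2 - angle k p)]
  obtain ⟨n, hn, hkn, hnx⟩ := exists_angle_eq_inner_neg hk1 (mem_Sph_iff.1 hxS) hkx hβ
    (by linarith [angle_nonneg k p, Real.pi_pos])
  have hnp : 0 < ⟪n, p⟫ := angle_lt_pi_div_two_iff.1
    ((angle_le_angle_add_angle n k p).trans_lt (by rw [angle_comm, hkn]; exact hβp))
  have hlt := hRmin _ (hRbody.inter_Hemi hn hp hnp) inter_subset_left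
    fun h => hnx.not_ge (h ▸ hxR).2.2
  have hge := thick_le_thick_inter_Hemi hRbody hth hn fun u hu =>
    (angle_le_angle_add_angle u k n).trans (by rw [angle_comm u k, hkn]; linarith [hsmax u hu])
  linarith

/-- a reduced spherical body of thickness at least `π/2` is a
body of constant width `Δ(R)`. -/
theorem stmt18 {d : ℕ} (R : Set (E d)) (hR : Reduced R)
    (hth : Real.pi / 2 ≤ thick R) :
    ∀ k ∈ Sph d, Supports k R → width R k = thick R := by
  intro k hk hkR
  obtain ⟨k', hk', hk'R, hangle⟩ := exists_supports_pi_sub_thick_le_angle hR hth hk hkR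
  exact width_eq_thick_of_supports hR.1.2.2.2 hk hkR hk' hk'R (by linarith [Real.pi_pos]) hangle
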